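/- arXiv:2406.16745 — 6 statements merged into one kernel-verified Lean document; each statement's English description precedes it below -/
import Mathlib

section
/- Let E be a real inner product space, t a natural number, v_1, …, v_t ∈ E, λ ≥ 0 and B ≥ 0 real numbers. Define g : E → E by g(θ) = λ·θ + Σ_{τ=1}^t s(⟨θ, v_τ⟩)·v_τ. If θ₁, θ₂ ∈ E satisfy |⟨θ_i, v_τ⟩| ≤ B for all τ ∈ {1,…,t} and i ∈ {1,2}, then ⟨g(θ₂) − g(θ₁), θ₂ − θ₁⟩ ≥ λ·‖θ₂ − θ₁‖² + s(B)·(1 − s(B)) · Σ_{τ=1}^t ⟨θ₂ − θ₁, v_τ⟩². -/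
/-!
Expanding the inner product leaves `λ‖θ₂ - θ₁‖²` plus, for each `τ`, the scalar term
`(s b - s a)(b - a)` with `a = ⟪θ₁, v τ⟫`, `b = ⟪θ₂, v τ⟫`. Since `ṡ = s(1 - s) = 1/(2 + 2 cosh)`
is even and decreasing in `|z|`, it is at least `ṡ(B)` on `[-B, B]`, and the mean value
inequality gives `(s b - s a)(b - a) ≥ ṡ(B)(b - a)²`.
-/

open scoped RealInnerProductSpace

noncomputable def sigmoid (z : ℝ) : ℝ := 1 / (1 + Real.exp (-z))

theorem sigmoid_eq_real_sigmoid : sigmoid = Real.sigmoid := by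
  funext z
  rw [sigmoid, Real.sigmoid_def, one_div]

theorem Convex.mul_sq_le_image_sub_mul_sub_of_le_deriv {D : Set ℝ} (hD : Convex ℝ D)
    {f : ℝ → ℝ} (hf : ContinuousOn f D) (hf' : DifferentiableOn ℝ f (interior D)) {C : ℝ}
    (hf'_ge : ∀ x ∈ interior D, C ≤ deriv f x) {x y : ℝ} (hx : x ∈ D) (hy : y ∈ D) :
    C * (y - x) ^ 2 ≤ (f y - f x) * (y - x) := by
  rcases le_total x y with hxy | hyx
  · have h := hD.mul_sub_le_image_sub_of_le_deriv hf hf' hf'_ge x hx y hy hxy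
    nlinarith [sub_nonneg.2 hxy]
  · have h := hD.mul_sub_le_image_sub_of_le_deriv hf hf' hf'_ge y hy x hx hyx
    nlinarith [sub_nonneg.2 hyx]

theorem Real.sigmoid_mul_one_sub_sigmoid (x : ℝ) :
    Real.sigmoid x * (1 - Real.sigmoid x) = (2 + 2 * Real.cosh x)⁻¹ := by
  have h : Real.exp x * Real.exp (-x) = 1 := by rw [← Real.exp_add, add_neg_cancel, Real.exp_zero]
  rw [← Real.sigmoid_neg, ← Real.sigmoid_mul_rexp_neg, Real.sigmoid_def, Real.cosh_eq]
  field_simp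
  linear_combination h

theorem Real.sigmoid_mul_one_sub_sigmoid_le_of_abs_le {x B : ℝ} (h : |x| ≤ B) :
    Real.sigmoid B * (1 - Real.sigmoid B) ≤ Real.sigmoid x * (1 - Real.sigmoid x) := by
  rw [Real.sigmoid_mul_one_sub_sigmoid, Real.sigmoid_mul_one_sub_sigmoid]
  gcongr
  exact Real.cosh_le_cosh.2 (h.trans (le_abs_self B))

theorem Real.sigmoid_mul_one_sub_mul_sq_le {a b B : ℝ} (ha : |a| ≤ B) (hb : |b| ≤ B) :
    Real.sigmoid B * (1 - Real.sigmoid B) * (b - a) ^ 2 ≤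
      (Real.sigmoid b - Real.sigmoid a) * (b - a) := by
  refine (convex_Icc (-B) B).mul_sq_le_image_sub_mul_sub_of_le_deriv
    continuous_sigmoid.continuousOn differentiable_sigmoid.differentiableOn
    (fun x hx => ?_) (abs_le.1 ha) (abs_le.1 hb)
  rw [Real.deriv_sigmoid]
  exact Real.sigmoid_mul_one_sub_sigmoid_le_of_abs_le
    (abs_le.2 (interior_subset (s := Set.Icc (-B) B) hx))

theorem inner_sub_smul_add_sum_smul {E ι : Type*} [NormedAddCommGroup E]
    [InnerProductSpace ℝ E] (s : Finset ι) (v : ι → E) (φ : ℝ → ℝ) (lam : ℝ) (x y : E) :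
    ⟪(lam • y + ∑ i ∈ s, φ ⟪y, v i⟫ • v i) - (lam • x + ∑ i ∈ s, φ ⟪x, v i⟫ • v i), y - x⟫ =
      lam * ‖y - x‖ ^ 2 + ∑ i ∈ s, (φ ⟪y, v i⟫ - φ ⟪x, v i⟫) * ⟪y - x, v i⟫ := by
  rw [add_sub_add_comm, ← smul_sub, ← Finset.sum_sub_distrib, inner_add_left,
    real_inner_smul_left, real_inner_self_eq_norm_sq, sum_inner]
  congr 1
  refine Finset.sum_congr rfl fun i _ => ?_
  rw [← sub_smul, real_inner_smul_left, real_inner_comm (y - x)]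

theorem inner_gradient_difference_lower_bound_general
    (E : Type*) [NormedAddCommGroup E] [InnerProductSpace ℝ E]
    (t : ℕ) (v : Fin t → E) (lam B : ℝ)
    (g : E → E) (hg : ∀ θ, g θ = lam • θ + ∑ τ, sigmoid ⟪θ, v τ⟫ • v τ)
    (θ₁ θ₂ : E)
    (h₁ : ∀ τ, |⟪θ₁, v τ⟫| ≤ B) (h₂ : ∀ τ, |⟪θ₂, v τ⟫| ≤ B) :
    lam * ‖θ₂ - θ₁‖ ^ 2 +
        sigmoid B * (1 - sigmoid B) * ∑ τ, ⟪θ₂ - θ₁, v τ⟫ ^ 2 ≤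
      ⟪g θ₂ - g θ₁, θ₂ - θ₁⟫ := by
  rw [hg, hg, inner_sub_smul_add_sum_smul, Finset.mul_sum, sigmoid_eq_real_sigmoid]
  refine add_le_add_right (Finset.sum_le_sum fun τ _ => ?_) _
  rw [inner_sub_left]
  exact Real.sigmoid_mul_one_sub_mul_sq_le (h₁ τ) (h₂ τ)

theorem inner_gradient_difference_lower_bound
    (E : Type*) [NormedAddCommGroup E] [InnerProductSpace ℝ E]
    (t : ℕ) (v : Fin t → E) (lam B : ℝ) (hlam : 0 ≤ lam) (hB : 0 ≤ B)
    (g : E → E) (hg : ∀ θ, g θ = lam • θ + ∑ τ, sigmoid ⟪θ, v τ⟫ • v τ)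
    (θ₁ θ₂ : E)
    (h₁ : ∀ τ, |⟪θ₁, v τ⟫| ≤ B) (h₂ : ∀ τ, |⟪θ₂, v τ⟫| ≤ B) :
    lam * ‖θ₂ - θ₁‖ ^ 2 +
        sigmoid B * (1 - sigmoid B) * ∑ τ, ⟪θ₂ - θ₁, v τ⟫ ^ 2 ≤
      ⟪g θ₂ - g θ₁, θ₂ - θ₁⟫ :=
  inner_gradient_difference_lower_bound_general E t v lam B g hg θ₁ θ₂ h₁ h₂
end

section
/- Let n, t be natural numbers, ρ > 0 a real number, Φ a real t×n matrix, and u ∈ ℝ^n. Then the matrices Φ Φᵀ + ρ·I_t and Φᵀ Φ + ρ·I_n are invertible, and ‖u‖² − (Φu)ᵀ (Φ Φᵀ + ρ·I_t)⁻¹ (Φu) = ρ · uᵀ (Φᵀ Φ + ρ·I_n)⁻¹ u. -/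
/-!
Write `A = ΦΦᵀ + ρI` and `B = ΦᵀΦ + ρI`; both are positive definite. The push-through identity
`B Φᵀ = Φᵀ A` gives `B (I - Φᵀ A⁻¹ Φ) = B - ΦᵀΦ = ρI`, so `ρ B⁻¹ = I - Φᵀ A⁻¹ Φ`, and the
left-hand side of the identity is the quadratic form of `I - Φᵀ A⁻¹ Φ` at `u`.
-/

open Matrix

namespace Matrix

variable {m n K : Type*} [Fintype m] [Fintype n] [DecidableEq m]

theorem posDef_mul_transpose_add_smul_one (A : Matrix m n ℝ) {ρ : ℝ} (hρ : 0 < ρ) :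
    (A * Aᵀ + ρ • (1 : Matrix m m ℝ)).PosDef := by
  simpa using PosDef.posSemidef_add (posSemidef_self_mul_conjTranspose A) (PosDef.one.smul hρ)

theorem transpose_mul_add_smul_one_mul_transpose [DecidableEq n] [CommRing K] (A : Matrix m n K)
    (ρ : K) :
    (Aᵀ * A + ρ • 1) * Aᵀ = Aᵀ * (A * Aᵀ + ρ • 1) := by
  rw [Matrix.add_mul, Matrix.mul_add, Matrix.mul_assoc, Matrix.smul_mul, Matrix.mul_smul,
    Matrix.one_mul, Matrix.mul_one]

theorem inv_transpose_mul_add_smul_one [DecidableEq n] [Field K] (A : Matrix m n K) {ρ : K}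
    (hρ : ρ ≠ 0) (hA : IsUnit (A * Aᵀ + ρ • (1 : Matrix m m K))) :
    (Aᵀ * A + ρ • 1)⁻¹ = ρ⁻¹ • (1 - Aᵀ * (A * Aᵀ + ρ • 1)⁻¹ * A) := by
  refine inv_eq_right_inv ?_
  have hcancel : (Aᵀ * A + ρ • 1) * (Aᵀ * (A * Aᵀ + ρ • 1)⁻¹ * A) = Aᵀ * A := by
    rw [← Matrix.mul_assoc, ← Matrix.mul_assoc, transpose_mul_add_smul_one_mul_transpose,
      Matrix.mul_assoc Aᵀ, mul_nonsing_inv _ ((isUnit_iff_isUnit_det _).mp hA), Matrix.mul_one]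
  rw [Matrix.mul_smul, Matrix.mul_sub, hcancel, Matrix.mul_one, add_sub_cancel_left, smul_smul,
    inv_mul_cancel₀ hρ, one_smul]

omit [DecidableEq m] in
theorem mulVec_dotProduct_mulVec_mulVec [CommSemiring K] (A : Matrix m n K) (M : Matrix m m K)
    (u : n → K) :
    (A *ᵥ u) ⬝ᵥ (M *ᵥ (A *ᵥ u)) = u ⬝ᵥ ((Aᵀ * M * A) *ᵥ u) := by
  rw [← mulVec_mulVec, ← mulVec_mulVec, dotProduct_mulVec u, ← mulVec_transpose,
    transpose_transpose, dotProduct_comm]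

end Matrix

theorem ridge_variance_identity
    (n t : ℕ) (ρ : ℝ) (hρ : 0 < ρ)
    (Φ : Matrix (Fin t) (Fin n) ℝ) (u : Fin n → ℝ) :
    IsUnit (Φ * Φᵀ + ρ • (1 : Matrix (Fin t) (Fin t) ℝ)) ∧
    IsUnit (Φᵀ * Φ + ρ • (1 : Matrix (Fin n) (Fin n) ℝ)) ∧
    (∑ i, u i ^ 2) -
        (Φ *ᵥ u) ⬝ᵥ ((Φ * Φᵀ + ρ • (1 : Matrix (Fin t) (Fin t) ℝ))⁻¹ *ᵥ (Φ *ᵥ u)) =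
      ρ * (u ⬝ᵥ ((Φᵀ * Φ + ρ • (1 : Matrix (Fin n) (Fin n) ℝ))⁻¹ *ᵥ u)) := by
  have hA := (posDef_mul_transpose_add_smul_one Φ hρ).isUnit
  have hB : IsUnit (Φᵀ * Φ + ρ • (1 : Matrix (Fin n) (Fin n) ℝ)) := by
    simpa using (posDef_mul_transpose_add_smul_one Φᵀ hρ).isUnit
  refine ⟨hA, hB, ?_⟩
  have hnorm : ∑ i, u i ^ 2 = u ⬝ᵥ u := by simp only [dotProduct, sq]
  rw [inv_transpose_mul_add_smul_one Φ hρ.ne' hA, mulVec_dotProduct_mulVec_mulVec, hnorm,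
    smul_mulVec, dotProduct_smul, smul_eq_mul, ← mul_assoc, mul_inv_cancel₀ hρ.ne', one_mul,
    sub_mulVec, one_mulVec, dotProduct_sub]
end

section
/- Let c > 0 be a real number, T a natural number, and a_1, …, a_T real numbers with 0 ≤ a_t ≤ c for all t. Then Σ_{t=1}^T a_t ≤ (c / log(1 + c)) · Σ_{t=1}^T log(1 + a_t). -/
open Real

lemma key_pointwise (c : ℝ) (hc : 0 < c) (x : ℝ) (hx0 : 0 ≤ x) (hxc : x ≤ c) :
    x ≤ (c / Real.log (1 + c)) * Real.log (1 + x) := by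
  have hlog : 0 < Real.log (1 + c) := Real.log_pos (by linarith)
  rw [div_mul_eq_mul_div, le_div_iff₀ hlog]
  have hconc := (strictConcaveOn_log_Ioi.concaveOn).2
    (Set.mem_Ioi.2 (by norm_num : (0:ℝ) < 1))
    (Set.mem_Ioi.2 (by linarith : (0:ℝ) < 1 + c))
    (show (0:ℝ) ≤ 1 - x / c by rw [sub_nonneg, div_le_one hc]; exact hxc)
    (show (0:ℝ) ≤ x / c by positivity)
    (show 1 - x / c + x / c = 1 by ring)
  simp only [smul_eq_mul, Real.log_one, mul_zero, zero_add] at hconc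
  have heq : (1 - x / c) * 1 + x / c * (1 + c) = 1 + x := by
    field_simp; ring
  rw [heq] at hconc
  calc x * Real.log (1 + c) = c * (x / c * Real.log (1 + c)) := by
        field_simp
    _ ≤ c * Real.log (1 + x) := by
        exact mul_le_mul_of_nonneg_left hconc hc.le

theorem sum_le_const_mul_sum_log_one_add
    (c : ℝ) (hc : 0 < c) (T : ℕ) (a : Fin T → ℝ)
    (ha : ∀ i, 0 ≤ a i ∧ a i ≤ c) :
    ∑ i, a i ≤ (c / Real.log (1 + c)) * ∑ i, Real.log (1 + a i) := by
  rw [Finset.mul_sum]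
  exact Finset.sum_le_sum fun i _ => key_pointwise c hc (a i) (ha i).1 (ha i).2
end

section
/- Let X be a type and let f, g, w : X → ℝ with |s(f(x)) − s(g(x))| ≤ w(x) for every x ∈ X. Suppose x_t ∈ X maximizes the upper confidence bound, i.e., s(g(x)) + w(x) ≤ s(g(x_t)) + w(x_t) for every x ∈ X. Then for every x ∈ X, s(f(x)) − s(f(x_t)) ≤ 2·w(x_t). -/
theorem ucb_single_step_regret
    (X : Type*) (f g w : X → ℝ)
    (hconf : ∀ x, |sigmoid (f x) - sigmoid (g x)| ≤ w x)
    (xt : X) (hxt : ∀ x, sigmoid (g x) + w x ≤ sigmoid (g xt) + w xt) :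
    ∀ x, sigmoid (f x) - sigmoid (f xt) ≤ 2 * w xt := by
  intro x
  have h1 := abs_le.mp (hconf x)
  have h2 := abs_le.mp (hconf xt)
  have h3 := hxt x
  linarith
end

section
/- Let X be a type, f : X → ℝ, and g, w : X × X → ℝ with g(x, y) = −g(y, x) and w(x, y) = w(y, x) for all x, y ∈ X, and |s(f(x) − f(x')) − s(g(x, x'))| ≤ w(x, x') for all x, x' ∈ X. Define the plausible maximizer set M = { x ∈ X : ∀ x' ∈ X, s(g(x, x')) + w(x, x') ≥ 1/2 }. Let x* ∈ X satisfy f(x) ≤ f(x*) for all x ∈ X, and let x_t, x_t' ∈ M satisfy w(a, b) ≤ w(x_t, x_t') for all a, b ∈ M. Then s(f(x*) − f(x_t)) + s(f(x*) − f(x_t')) − 1 ≤ 4·w(x_t, x_t'). -/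
lemma sigmoid_neg (z : ℝ) : sigmoid (-z) = 1 - sigmoid z := by
  unfold sigmoid
  have h1 : (0:ℝ) < 1 + Real.exp (-z) := by positivity
  have h2 : (0:ℝ) < 1 + Real.exp (- -z) := by positivity
  rw [neg_neg] at h2 ⊢
  field_simp
  rw [Real.exp_neg]
  have := Real.exp_pos z
  field_simp
  ring

lemma sigmoid_mono : Monotone sigmoid := by
  intro a b hab
  unfold sigmoid
  have h1 : (0:ℝ) < 1 + Real.exp (-b) := by positivity
  have h2 : (0:ℝ) < 1 + Real.exp (-a) := by positivity
  apply div_le_div_of_nonneg_left one_pos.le h1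
  have := Real.exp_le_exp.mpr (neg_le_neg hab)
  linarith

lemma sigmoid_zero : sigmoid 0 = 1 / 2 := by
  unfold sigmoid; rw [neg_zero, Real.exp_zero]; norm_num

theorem maxinp_single_step_dueling_regret
    (X : Type*) (f : X → ℝ) (g w : X → X → ℝ)
    (hg : ∀ x y, g x y = -g y x) (hw : ∀ x y, w x y = w y x)
    (hconf : ∀ x x', |sigmoid (f x - f x') - sigmoid (g x x')| ≤ w x x')
    (M : Set X)
    (hM : M = {x : X | ∀ x', 1 / 2 ≤ sigmoid (g x x') + w x x'})
    (xstar : X) (hstar : ∀ x, f x ≤ f xstar)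
    (xt xt' : X) (hxt : xt ∈ M) (hxt' : xt' ∈ M)
    (hmax : ∀ a ∈ M, ∀ b ∈ M, w a b ≤ w xt xt') :
    sigmoid (f xstar - f xt) + sigmoid (f xstar - f xt') - 1 ≤ 4 * w xt xt' := by
  subst hM
  -- xstar is in M
  have hstarM : xstar ∈ {x : X | ∀ x', 1 / 2 ≤ sigmoid (g x x') + w x x'} := by
    intro x'
    have h1 := hconf xstar x'
    have h2 : sigmoid 0 ≤ sigmoid (f xstar - f x') :=
      sigmoid_mono (by linarith [hstar x'])
    rw [sigmoid_zero] at h2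
    have := abs_le.mp h1
    linarith [this.1]
  -- key step for an element y of M
  have key : ∀ y, y ∈ {x : X | ∀ x', 1 / 2 ≤ sigmoid (g x x') + w x x'} →
      sigmoid (f xstar - f y) ≤ 1 / 2 + 2 * w y xstar := by
    intro y hy
    have h1 := hy xstar
    have h2 : sigmoid (g xstar y) = 1 - sigmoid (g y xstar) := by
      rw [hg xstar y, sigmoid_neg]
    have h3 := abs_le.mp (hconf xstar y)
    have h4 : w xstar y = w y xstar := hw xstar y
    linarith [h3.1, h3.2]
  have k1 := key xt hxt
  have k2 := key xt' hxt'
  have m1 := hmax xt hxt xstar hstarM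
  have m2 := hmax xt' hxt' xstar hstarM
  linarith
end

section
/- Let X be a nonempty finite type, f, f̂ : X → ℝ, and w : X × X → ℝ with w(x, y) = w(y, x) for all x, y ∈ X and |(f(x) − f(x')) − (f̂(x) − f̂(x'))| ≤ w(x, x') for all x, x' ∈ X. Let x̂ ∈ X be a maximizer of f̂, define u = max_{z ∈ X} [ (f̂(z) − f̂(x̂)) + w(z, x̂) ], and for each x ∈ X define the estimated gap Δ̂(x) = u + f̂(x̂) − f̂(x). Then for every x ∈ X, max_{z ∈ X} f(z) − f(x) ≤ 2·Δ̂(x). -/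
theorem true_gap_le_two_mul_estimated_gap
    (X : Type*) [Fintype X] [Nonempty X]
    (f fhat : X → ℝ) (w : X → X → ℝ)
    (hw : ∀ x y, w x y = w y x)
    (hconf : ∀ x x', |(f x - f x') - (fhat x - fhat x')| ≤ w x x')
    (xhat : X) (hxhat : ∀ x, fhat x ≤ fhat xhat)
    (u : ℝ)
    (hu : u = Finset.univ.sup' Finset.univ_nonempty
      (fun z => (fhat z - fhat xhat) + w z xhat))
    (Δhat : X → ℝ) (hΔ : ∀ x, Δhat x = u + fhat xhat - fhat x) :
    ∀ x, Finset.univ.sup' Finset.univ_nonempty f - f x ≤ 2 * Δhat x := by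
  intro x
  rw [hΔ, sub_le_iff_le_add]
  apply Finset.sup'_le
  intro z _
  have h1 := abs_le.1 (hconf z xhat)
  have h2 := abs_le.1 (hconf xhat x)
  have h3 : fhat z - fhat xhat + w z xhat ≤ u := by
    rw [hu]; exact Finset.le_sup' (fun z => (fhat z - fhat xhat) + w z xhat) (Finset.mem_univ z)
  have h4 : fhat x - fhat xhat + w x xhat ≤ u := by
    rw [hu]; exact Finset.le_sup' (fun z => (fhat z - fhat xhat) + w z xhat) (Finset.mem_univ x)
  have h5 := hw xhat x
  linarith
end
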